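/- arXiv:2506.23019 — 4 statements merged into one kernel-verified Lean document; each statement's English description precedes it below -/
import Mathlib

section
/- Let T be an alternating trilinear form on V and A linear with T(A x, y, z) = T(x, A y, z). With Q := -A², N_A(x,y,z) := -T(A x, A y, z) - T(x, y, A² z) - T(A x, y, A z) - T(x, A y, A z), and dF(x,y,z) := -T(x,y,A z) - T(y,z,A x) - T(z,x,A y), one has T(Q x, y, z) = (1/4) N_A(x,y,z) and (1/4) N_A(x,y,z) = (1/3) dF(A x, y, z). -/
/-! Alternation lets `A` pass from the third slot of `T` to the first, and the torsion condition
moves it between the first two; so `A` moves freely between all three slots, and each term of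
`N_A(x, y, z)` and of `dF(A x, y, z)` equals `-T(A² x, y, z)`. Hence
`N_A(x, y, z) = -4 T(A² x, y, z) = 4 T(Q x, y, z)` and `dF(A x, y, z) = -3 T(A² x, y, z)`. -/

section Trilinear

variable {R M : Type*} [CommRing R] [AddCommGroup M] [Module R M]
  {T : M →ₗ[R] M →ₗ[R] M →ₗ[R] R}

theorem trilinear_apply_rotate (hT12 : ∀ x y z : M, T x y z = -T y x z)
    (hT23 : ∀ x y z : M, T x y z = -T x z y) (x y z : M) : T x y z = T z x y := by
  rw [hT12 z x y, hT23 x z y, neg_neg]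

theorem trilinear_apply_map_third {A : M →ₗ[R] M} (hT23 : ∀ x y z : M, T x y z = -T x z y)
    (hAT : ∀ x y z : M, T (A x) y z = T x (A y) z) (x y z : M) :
    T x y (A z) = T (A x) y z := by
  rw [hT23 x y (A z), ← hAT x z y, hT23 (A x) z y, neg_neg]

end Trilinear

theorem stmt_9 {V : Type*} [AddCommGroup V] [Module ℝ V]
    (T : V →ₗ[ℝ] V →ₗ[ℝ] V →ₗ[ℝ] ℝ)
    (hT12 : ∀ x y z : V, T x y z = -T y x z)
    (hT23 : ∀ x y z : V, T x y z = -T x z y)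
    (A Q : V →ₗ[ℝ] V)
    (hAT : ∀ x y z : V, T (A x) y z = T x (A y) z)
    (hQ : ∀ x : V, Q x = -(A (A x)))
    (N : V → V → V → ℝ)
    (hN : ∀ x y z : V,
      N x y z = -T (A x) (A y) z - T x y (A (A z)) - T (A x) y (A z) - T x (A y) (A z))
    (dF : V → V → V → ℝ)
    (hdF : ∀ x y z : V, dF x y z = -T x y (A z) - T y z (A x) - T z x (A y)) :
    (∀ x y z : V, T (Q x) y z = (1 / 4) * N x y z) ∧
    (∀ x y z : V, (1 / 4) * N x y z = (1 / 3) * dF (A x) y z) := by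
  have hrot := trilinear_apply_rotate hT12 hT23
  have hthird := trilinear_apply_map_third hT23 hAT
  have hsecond : ∀ x y z : V, T (A x) (A y) z = T (A (A x)) y z :=
    fun x y z => (hAT (A x) y z).symm
  have hN_eq : ∀ x y z : V, N x y z = -4 * T (A (A x)) y z := by
    intro x y z
    rw [hN, hsecond, hthird x y, hthird, ← hAT x y, hthird]
    ring
  have hdF_eq : ∀ x y z : V, dF (A x) y z = -3 * T (A (A x)) y z := by
    intro x y z
    rw [hdF, hthird (A x), hrot y z, ← hrot (A x) (A y) z, hsecond]
    ring
  refine ⟨fun x y z => ?_, fun x y z => ?_⟩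
  · rw [hQ, map_neg, LinearMap.neg_apply, LinearMap.neg_apply, hN_eq]
    ring
  · rw [hN_eq, hdF_eq]
    ring
end

section
/- Let V be a finite-dimensional real inner product space of even dimension 2m, and A : V → V skew-adjoint and invertible. Then there exists a basis {e₁, A e₁, …, e_m, A e_m} of V consisting of mutually orthogonal nonzero vectors, where each e_i is an eigenvector of Q := -A². Moreover for each i, ⟨A e_i, A e_i⟩ = λ_i ⟨e_i, e_i⟩ where λ_i is the eigenvalue of Q at e_i. -/
open scoped RealInnerProductSpace
open Module Submodule

/-!
`Q = -A²` is symmetric, so every nonzero `A`-invariant subspace `W` contains an eigenvector `e`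
of `Q`. The plane `span {e, A e}` is `A`-invariant because `A (A e) = -λ e`, and two-dimensional
because `e ⟂ A e` for skew `A` and `A e ≠ 0`. As `A` is skew, the orthogonal complement of that
plane in `W` is again `A`-invariant, so induction splits `V` into mutually orthogonal planes
`span {eᵢ, A eᵢ}`. Finally `⟪A e, A e⟫ = -⟪e, A (A e)⟫ = ⟪e, Q e⟫ = λ ⟪e, e⟫`.
-/

section Skew

variable {V : Type*} [NormedAddCommGroup V] [InnerProductSpace ℝ V] {A Q : V →ₗ[ℝ] V}

lemma inner_apply_self_eq_zero_of_skew (hA : ∀ x y : V, ⟪A x, y⟫ = -⟪x, A y⟫) (x : V) :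
    ⟪A x, x⟫ = 0 := by
  linarith [hA x x, real_inner_comm x (A x)]

lemma isSymmetric_of_eq_neg_sq (hA : ∀ x y : V, ⟪A x, y⟫ = -⟪x, A y⟫)
    (hQ : ∀ x : V, Q x = -(A (A x))) : Q.IsSymmetric := by
  intro x y
  rw [hQ, hQ, inner_neg_left, inner_neg_right, hA, hA, neg_neg]

lemma inner_apply_apply_eq_mul_inner_of_eigen (hA : ∀ x y : V, ⟪A x, y⟫ = -⟪x, A y⟫)
    (hQ : ∀ x : V, Q x = -(A (A x))) {x : V} {μ : ℝ} (hx : Q x = μ • x) :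
    ⟪A x, A x⟫ = μ * ⟪x, x⟫ := by
  rw [hA, ← inner_neg_right, ← hQ, hx, real_inner_smul_right]

lemma orthogonal_mem_invtSubmodule_of_skew (hA : ∀ x y : V, ⟪A x, y⟫ = -⟪x, A y⟫)
    {U : Submodule ℝ V} (hU : U ∈ End.invtSubmodule A) : Uᗮ ∈ End.invtSubmodule A := by
  intro x hx
  rw [mem_comap, mem_orthogonal]
  intro u hu
  rw [real_inner_comm, hA, inner_eq_zero_symm.mp (hx _ (hU hu)), neg_zero]

lemma span_pair_mem_invtSubmodule (hQ : ∀ x : V, Q x = -(A (A x))) {x : V} {μ : ℝ}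
    (hx : Q x = μ • x) : span ℝ {x, A x} ∈ End.invtSubmodule A := by
  have hAAx : A (A x) = -(μ • x) := by rw [← hx, hQ, neg_neg]
  rw [End.mem_invtSubmodule_iff_map_le, map_span_le]
  rintro y (rfl | rfl | _)
  · exact subset_span (by simp)
  · rw [hAAx]
    exact neg_mem (smul_mem _ _ (subset_span (by simp)))

lemma finrank_span_pair_of_skew (hA : ∀ x y : V, ⟪A x, y⟫ = -⟪x, A y⟫)
    (hAinj : Function.Injective A) {x : V} (hx : x ≠ 0) :
    finrank ℝ (span ℝ {x, A x}) = 2 := by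
  have hAx : A x ≠ 0 := (map_ne_zero_iff A hAinj).2 hx
  have hli : LinearIndependent ℝ ![x, A x] := by
    refine linearIndependent_of_ne_zero_of_inner_eq_zero (by simp [Fin.forall_fin_two, hx, hAx]) ?_
    intro i j hij
    fin_cases i <;> fin_cases j <;>
      simp_all [inner_apply_self_eq_zero_of_skew hA, real_inner_comm (A x)]
  rw [← Matrix.range_cons_cons_empty x (A x) ![], finrank_span_eq_card hli, Fintype.card_fin]

lemma exists_eigenvector_mem_of_isSymmetric [FiniteDimensional ℝ V] (hQ : Q.IsSymmetric)
    {W : Submodule ℝ V} (hW : W ∈ End.invtSubmodule Q) (hW0 : 0 < finrank ℝ W) :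
    ∃ x ∈ W, x ≠ 0 ∧ ∃ μ : ℝ, Q x = μ • x := by
  have : Nontrivial W := Module.nontrivial_of_finrank_pos hW0
  obtain ⟨x, hx, hx0⟩ :=
    (hQ.restrict_invariant hW).hasEigenvalue_iSup_of_finiteDimensional.exists_hasEigenvector
  exact ⟨x, x.2, by simpa using hx0, _, congrArg Subtype.val (End.mem_eigenspace_iff.mp hx)⟩

lemma pairwise_inner_sumElim_eq_zero_of_skew (hA : ∀ x y : V, ⟪A x, y⟫ = -⟪x, A y⟫)
    {ι : Type*} {e : ι → V}
    (he : Pairwise fun i j => span ℝ {e i, A (e i)} ⟂ span ℝ {e j, A (e j)}) :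
    Pairwise fun j k =>
      ⟪Sum.elim e (fun i => A (e i)) j, Sum.elim e (fun i => A (e i)) k⟫ = 0 := by
  have hmem : ∀ j : ι ⊕ ι,
      Sum.elim e (fun i => A (e i)) j ∈ span ℝ {e (j.elim id id), A (e (j.elim id id))} := by
    rintro (i | i) <;> exact subset_span (by simp)
  intro j k hjk
  by_cases h : j.elim id id = k.elim id id
  · rcases j with i | i <;> rcases k with k | k <;>
      simp only [Sum.elim_inl, Sum.elim_inr, id] at h ⊢ <;> subst h
    · exact absurd rfl hjk
    · rw [real_inner_comm, inner_apply_self_eq_zero_of_skew hA]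
    · exact inner_apply_self_eq_zero_of_skew hA _
    · exact absurd rfl hjk
  · exact (he h).inner_eq (hmem j) (hmem k)

theorem exists_eigenvectors_orthogonal_planes [FiniteDimensional ℝ V]
    (hA : ∀ x y : V, ⟪A x, y⟫ = -⟪x, A y⟫) (hAinj : Function.Injective A)
    (hQ : ∀ x : V, Q x = -(A (A x))) (m : ℕ) :
    ∀ W ∈ End.invtSubmodule A, finrank ℝ W = 2 * m →
      ∃ (e : Fin m → V) (lam : Fin m → ℝ), (∀ i, e i ∈ W) ∧ (∀ i, e i ≠ 0) ∧
        (∀ i, Q (e i) = lam i • e i) ∧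
        Pairwise fun i j => span ℝ {e i, A (e i)} ⟂ span ℝ {e j, A (e j)} := by
  induction m with
  | zero => exact fun _ _ _ => ⟨finZeroElim, finZeroElim, finZeroElim, finZeroElim, finZeroElim,
      fun i => i.elim0⟩
  | succ m ih =>
    intro W hW hdim
    have hWQ : W ∈ End.invtSubmodule Q := fun x hx => by
      rw [mem_comap, hQ]
      exact neg_mem (hW (hW hx))
    obtain ⟨x, hxW, hx0, μ, hx⟩ :=
      exists_eigenvector_mem_of_isSymmetric (isSymmetric_of_eq_neg_sq hA hQ) hWQ (by omega)
    set U := span ℝ {x, A x}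
    have hUW : U ≤ W := span_le.2 <| Set.insert_subset hxW (Set.singleton_subset_iff.2 (hW hxW))
    have hUperp : Uᗮ ∈ End.invtSubmodule A :=
      orthogonal_mem_invtSubmodule_of_skew hA (span_pair_mem_invtSubmodule hQ hx)
    obtain ⟨e, lam, heW, he0, heQ, he⟩ :=
      ih (Uᗮ ⊓ W) ((End.invtSubmodule A).inf_mem hUperp hW)
        (finrank_add_inf_finrank_orthogonal' hUW <| by
          rw [finrank_span_pair_of_skew hA hAinj hx0, hdim]; ring)
    have hplane : ∀ i, span ℝ {e i, A (e i)} ≤ Uᗮ := fun i =>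
      span_le.2 <| Set.insert_subset (heW i).1 (Set.singleton_subset_iff.2 (hUperp (heW i).1))
    refine ⟨Fin.cons x e, Fin.cons μ lam, Fin.cases hxW fun i => (heW i).2, Fin.cases hx0 he0,
      Fin.cases hx heQ, pairwise_fin_succ_iff.2 ⟨fun i => ?_, fun i => ?_, fun _ _ h => he h⟩⟩
    · exact (isOrtho_orthogonal_right U).symm.mono_left (hplane i)
    · exact (isOrtho_orthogonal_right U).mono_right (hplane i)

end Skew

theorem stmt_11 {V : Type*} [NormedAddCommGroup V] [InnerProductSpace ℝ V]
    [FiniteDimensional ℝ V] (m : ℕ)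
    (hdim : Module.finrank ℝ V = 2 * m)
    (A Q : V →ₗ[ℝ] V)
    (hA : ∀ x y : V, ⟪A x, y⟫ = -⟪x, A y⟫)
    (hAinv : Function.Bijective A)
    (hQ : ∀ x : V, Q x = -(A (A x))) :
    ∃ (b : Module.Basis (Fin m ⊕ Fin m) ℝ V) (lam : Fin m → ℝ),
      (∀ i : Fin m, b (Sum.inr i) = A (b (Sum.inl i))) ∧
      (∀ j k : Fin m ⊕ Fin m, j ≠ k → ⟪b j, b k⟫ = 0) ∧
      (∀ j : Fin m ⊕ Fin m, b j ≠ 0) ∧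
      (∀ i : Fin m, Q (b (Sum.inl i)) = lam i • b (Sum.inl i)) ∧
      (∀ i : Fin m,
        ⟪A (b (Sum.inl i)), A (b (Sum.inl i))⟫ = lam i * ⟪b (Sum.inl i), b (Sum.inl i)⟫) := by
  obtain ⟨e, lam, -, he0, heQ, he⟩ :=
    exists_eigenvectors_orthogonal_planes hA hAinv.injective hQ m ⊤ (End.invtSubmodule.top_mem A)
      (by rw [finrank_top, hdim])
  set v := Sum.elim e fun i => A (e i)
  have hv0 : ∀ j, v j ≠ 0 := by
    rintro (i | i)
    · exact he0 i
    · exact (map_ne_zero_iff A hAinv.injective).2 (he0 i)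
  have hvorth := pairwise_inner_sumElim_eq_zero_of_skew hA he
  let b := basisOfLinearIndependentOfCardEqFinrank' v
    (linearIndependent_of_ne_zero_of_inner_eq_zero hv0 hvorth) (by simp [hdim, two_mul])
  have hb : ⇑b = v := coe_basisOfLinearIndependentOfCardEqFinrank' _ _ _
  refine ⟨b, lam, fun i => ?_, fun j k hjk => ?_, fun j => ?_, fun i => ?_, fun i => ?_⟩ <;>
    simp only [hb]
  · rfl
  · exact hvorth hjk
  · exact hv0 j
  · exact heQ i
  · exact inner_apply_apply_eq_mul_inner_of_eigen hA hQ (heQ i)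
end

section
/- Let T be an alternating trilinear form on V and A, Q, ξ, η as in a weak almost contact structure. Define the weak-almost-contact Nijenhuis form N^wac(x,y,z) := N_A(x,y,z) + dη(x,y)·η(z), where dη(x,y) = T(x,y,ξ). If T satisfies the Q-torsion condition T(x,y,Qz) = T(x,Qy,z), then N^wac is totally skew-symmetric (alternating) in (x,y,z). -/
section WeakAlmostContact

variable {V : Type*} [AddCommGroup V] [Module ℝ V]
  (T : V →ₗ[ℝ] V →ₗ[ℝ] V →ₗ[ℝ] ℝ) (A Q : V →ₗ[ℝ] V)

def qTorsionForm (x y z : V) : ℝ :=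
  T x y (Q z) - T (A x) (A y) z - T (A x) y (A z) - T x (A y) (A z)

/-- By `A² = -Q + η ⊗ ξ`, the term `-T(x, y, A²z)` of `N_A` is `T(x, y, Qz) - dη(x, y) η(z)`. -/
lemma nijenhuis_add_dη_eq_qTorsionForm (η : V →ₗ[ℝ] ℝ) (ξ : V)
    (hA2 : ∀ x : V, A (A x) = -(Q x) + η x • ξ) (x y z : V) :
    (-T (A x) (A y) z - T x y (A (A z)) - T (A x) y (A z) - T x (A y) (A z))
      + T x y ξ * η z = qTorsionForm T A Q x y z := by
  rw [qTorsionForm, hA2 z]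
  simp only [map_add, map_neg, map_smul, smul_eq_mul]
  ring

variable {T}

lemma qTorsionForm_swap₁₂ (hT12 : ∀ x y z : V, T x y z = -T y x z) (x y z : V) :
    qTorsionForm T A Q x y z = -qTorsionForm T A Q y x z := by
  simp only [qTorsionForm]
  rw [hT12 x y, hT12 (A x) (A y), hT12 (A x) y, hT12 x (A y)]
  ring

lemma qTorsionForm_swap₂₃ (hT23 : ∀ x y z : V, T x y z = -T x z y)
    (hQT : ∀ x y z : V, T x y (Q z) = T x (Q y) z) (x y z : V) :
    qTorsionForm T A Q x y z = -qTorsionForm T A Q x z y := by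
  have hQ : T x y (Q z) = -T x z (Q y) := by rw [hQT, hT23]
  simp only [qTorsionForm]
  rw [hQ, hT23 (A x) (A y), hT23 (A x) y, hT23 x (A y)]
  ring

end WeakAlmostContact

theorem stmt_16_general {V : Type*} [AddCommGroup V] [Module ℝ V]
    (T : V →ₗ[ℝ] V →ₗ[ℝ] V →ₗ[ℝ] ℝ)
    (hT12 : ∀ x y z : V, T x y z = -T y x z)
    (hT23 : ∀ x y z : V, T x y z = -T x z y)
    (A Q : V →ₗ[ℝ] V) (η : V →ₗ[ℝ] ℝ) (ξ : V)
    (hA2 : ∀ x : V, A (A x) = -(Q x) + η x • ξ)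
    (dη : V → V → ℝ)
    (hdη : ∀ x y : V, dη x y = T x y ξ)
    (N : V → V → V → ℝ)
    (hN : ∀ x y z : V,
      N x y z = -T (A x) (A y) z - T x y (A (A z)) - T (A x) y (A z) - T x (A y) (A z))
    (Nwac : V → V → V → ℝ)
    (hNwac : ∀ x y z : V, Nwac x y z = N x y z + dη x y * η z)
    (hQT : ∀ x y z : V, T x y (Q z) = T x (Q y) z) :
    (∀ x y z : V, Nwac x y z = -Nwac y x z) ∧
    (∀ x y z : V, Nwac x y z = -Nwac x z y) := by
  have hNwac_eq : ∀ x y z, Nwac x y z = qTorsionForm T A Q x y z := fun x y z => by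
    rw [hNwac, hN, hdη, nijenhuis_add_dη_eq_qTorsionForm T A Q η ξ hA2]
  simp only [hNwac_eq]
  exact ⟨qTorsionForm_swap₁₂ A Q hT12, qTorsionForm_swap₂₃ A Q hT23 hQT⟩

theorem stmt_16 {V : Type*} [AddCommGroup V] [Module ℝ V]
    (g : V →ₗ[ℝ] V →ₗ[ℝ] ℝ)
    (hg_symm : ∀ x y : V, g x y = g y x)
    (hg_nd : ∀ x : V, (∀ y : V, g x y = 0) → x = 0)
    (T : V →ₗ[ℝ] V →ₗ[ℝ] V →ₗ[ℝ] ℝ)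
    (hT12 : ∀ x y z : V, T x y z = -T y x z)
    (hT23 : ∀ x y z : V, T x y z = -T x z y)
    (A Q : V →ₗ[ℝ] V) (η : V →ₗ[ℝ] ℝ) (ξ : V)
    (hA_skew : ∀ x y : V, g (A x) y = -g x (A y))
    (hη : ∀ x : V, η x = g x ξ)
    (hηξ : η ξ = 1)
    (hAξ : A ξ = 0)
    (hQξ : Q ξ = ξ)
    (hA2 : ∀ x : V, A (A x) = -(Q x) + η x • ξ)
    (dη : V → V → ℝ)
    (hdη : ∀ x y : V, dη x y = T x y ξ)
    (N : V → V → V → ℝ)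
    (hN : ∀ x y z : V,
      N x y z = -T (A x) (A y) z - T x y (A (A z)) - T (A x) y (A z) - T x (A y) (A z))
    (Nwac : V → V → V → ℝ)
    (hNwac : ∀ x y z : V, Nwac x y z = N x y z + dη x y * η z)
    (hQT : ∀ x y z : V, T x y (Q z) = T x (Q y) z) :
    (∀ x y z : V, Nwac x y z = -Nwac y x z) ∧
    (∀ x y z : V, Nwac x y z = -Nwac x z y) :=
  stmt_16_general T hT12 hT23 A Q η ξ hA2 dη hdη N hN Nwac hNwac hQT
end

section
/- Let T be an alternating trilinear form on V and A, Q, ξ, η as in a weak almost para-contact structure (A² = Q - η⊗ξ, A ξ = 0, Q ξ = ξ). Define N^wapc(x,y,z) := N_A(x,y,z) - dη(x,y)·η(z) with dη(x,y) = T(x,y,ξ). If T satisfies T(Q x, y, z) = T(x, Q y, z) = T(x, y, Q z) for all x, y, z, then N^wapc(x,y,z) = -N^wapc(x,z,y) for all x, y, z (N^wapc is totally skew-symmetric). -/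
/-! Substituting `A² = Q - η ⊗ ξ` in `N_A` cancels the correction term `dη ⊗ η` exactly, leaving
`-T(Ax,Ay,z) - T(x,y,Qz) - T(Ax,y,Az) - T(x,Ay,Az)`. Here the first and last two terms are
skew in `(y, z)` because `T` is, and so is `T(x,y,Qz)` once `Q` can be moved from the third slot
to the second. -/

section

variable {R V : Type*} [CommRing R] [AddCommGroup V] [Module R V]

def reducedNijenhuis (T : V →ₗ[R] V →ₗ[R] V →ₗ[R] R) (A Q : V →ₗ[R] V) (x y z : V) : R :=
  -T (A x) (A y) z - T x y (Q z) - T (A x) y (A z) - T x (A y) (A z)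

theorem nijenhuis_sub_eq_reducedNijenhuis (T : V →ₗ[R] V →ₗ[R] V →ₗ[R] R) (A Q : V →ₗ[R] V)
    (η : V →ₗ[R] R) (ξ : V) (hA2 : ∀ x, A (A x) = Q x - η x • ξ) (x y z : V) :
    (-T (A x) (A y) z - T x y (A (A z)) - T (A x) y (A z) - T x (A y) (A z)) - T x y ξ * η z =
      reducedNijenhuis T A Q x y z := by
  rw [reducedNijenhuis, hA2, map_sub, map_smul, smul_eq_mul]
  ring

theorem reducedNijenhuis_swap (T : V →ₗ[R] V →ₗ[R] V →ₗ[R] R) (A Q : V →ₗ[R] V)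
    (hT23 : ∀ x y z, T x y z = -T x z y) (hQ23 : ∀ x y z, T x (Q y) z = T x y (Q z))
    (x y z : V) :
    reducedNijenhuis T A Q x y z = -reducedNijenhuis T A Q x z y := by
  have hQ : T x y (Q z) = -T x z (Q y) := by rw [← hQ23, hT23]
  simp only [reducedNijenhuis, hQ, hT23 (A x) (A y) z, hT23 (A x) y (A z), hT23 x (A y) (A z)]
  ring

end

theorem stmt_17_general {V : Type*} [AddCommGroup V] [Module ℝ V]
    (T : V →ₗ[ℝ] V →ₗ[ℝ] V →ₗ[ℝ] ℝ)
    (hT23 : ∀ x y z : V, T x y z = -T x z y)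
    (A Q : V →ₗ[ℝ] V) (η : V →ₗ[ℝ] ℝ) (ξ : V)
    (hA2 : ∀ x : V, A (A x) = Q x - η x • ξ)
    (dη : V → V → ℝ)
    (hdη : ∀ x y : V, dη x y = T x y ξ)
    (N : V → V → V → ℝ)
    (hN : ∀ x y z : V,
      N x y z = -T (A x) (A y) z - T x y (A (A z)) - T (A x) y (A z) - T x (A y) (A z))
    (Nwapc : V → V → V → ℝ)
    (hNwapc : ∀ x y z : V, Nwapc x y z = N x y z - dη x y * η z)
    (hQT : ∀ x y z : V, T (Q x) y z = T x (Q y) z ∧ T x (Q y) z = T x y (Q z)) :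
    ∀ x y z : V, Nwapc x y z = -Nwapc x z y := by
  intro x y z
  simp only [hNwapc, hN, hdη, nijenhuis_sub_eq_reducedNijenhuis T A Q η ξ hA2]
  exact reducedNijenhuis_swap T A Q hT23 (fun x y z => (hQT x y z).2) x y z

theorem stmt_17 {V : Type*} [AddCommGroup V] [Module ℝ V]
    (g : V →ₗ[ℝ] V →ₗ[ℝ] ℝ)
    (hg_symm : ∀ x y : V, g x y = g y x)
    (hg_nd : ∀ x : V, (∀ y : V, g x y = 0) → x = 0)
    (T : V →ₗ[ℝ] V →ₗ[ℝ] V →ₗ[ℝ] ℝ)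
    (hT12 : ∀ x y z : V, T x y z = -T y x z)
    (hT23 : ∀ x y z : V, T x y z = -T x z y)
    (A Q : V →ₗ[ℝ] V) (η : V →ₗ[ℝ] ℝ) (ξ : V)
    (hA_skew : ∀ x y : V, g (A x) y = -g x (A y))
    (hη : ∀ x : V, η x = g x ξ)
    (hηξ : η ξ = 1)
    (hAξ : A ξ = 0)
    (hQξ : Q ξ = ξ)
    (hA2 : ∀ x : V, A (A x) = Q x - η x • ξ)
    (dη : V → V → ℝ)
    (hdη : ∀ x y : V, dη x y = T x y ξ)
    (N : V → V → V → ℝ)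
    (hN : ∀ x y z : V,
      N x y z = -T (A x) (A y) z - T x y (A (A z)) - T (A x) y (A z) - T x (A y) (A z))
    (Nwapc : V → V → V → ℝ)
    (hNwapc : ∀ x y z : V, Nwapc x y z = N x y z - dη x y * η z)
    (hQT : ∀ x y z : V, T (Q x) y z = T x (Q y) z ∧ T x (Q y) z = T x y (Q z)) :
    ∀ x y z : V, Nwapc x y z = -Nwapc x z y :=
  stmt_17_general T hT23 A Q η ξ hA2 dη hdη N hN Nwapc hNwapc hQT
end
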